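/- arXiv:2007.02508 — 4 statements merged into one kernel-verified Lean document; each statement's English description precedes it below -/
import Mathlib

section
/- For every integer r ≥ 0, ₍ᵣ₊₃₎F₍ᵣ₊₂₎({1}_{r+3}; 3/2, {2}_{r+1}; 1) = (2^{r+1}(−1)^r / r!) · Σ_{j=0}^r (r choose j) (−log 2)^{r−j} ∫₀^{π/2} x · log^j(2 sin x) dx. -/
open scoped BigOperators
open scoped Real
open Filter

/-- Pochhammer symbol `(x)_n = x (x+1) ⋯ (x+n-1)` for a real `x`. -/
noncomputable def poch (x : ℝ) (n : ℕ) : ℝ := ∏ i ∈ Finset.range n, (x + i)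

/-- The generalized hypergeometric series `ₚF_q(a; b; z)`, where the numerator
parameters are the entries of the list `a` and the denominator parameters are
the entries of the list `b`. -/
noncomputable def hyp (a b : List ℝ) (z : ℝ) : ℝ :=
  ∑' n : ℕ, ((a.map fun x => poch x n).prod / (b.map fun x => poch x n).prod)
    * z ^ n / (n.factorial : ℝ)

/-!
The `n`-th term of the series is `W n / (n + 1) ^ (r + 1)` with `W n = ∫₀^{π/2} sin^{2n+1} x dx`.
Substituting `u = -log (sin θ)` in the Gamma integral gives
`r! / (2n + 2) ^ (r + 1) = ∫₀^{π/2} sin^{2n+1} θ cos θ (-log (sin θ)) ^ r dθ`, so the series is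
`2 ^ (r + 1) / r!` times `∫₀^{π/2} (∑ₙ W n sin^{2n+1} θ cos θ) (-log (sin θ)) ^ r dθ`; the
interchange is legitimate because `W n ≤ √(2 / (n + 1))` by Wallis' inequality. The inner sum is
`θ`: summing a geometric series under the integral,
`∑ₙ W n s ^ (2n) = ∫₀^{π/2} sin x / (1 - s² sin² x) dx = θ / (sin θ cos θ)` for `s = sin θ`.
The right-hand side is the binomial expansion of `∫₀^{π/2} x (log (2 sin x) - log 2) ^ r dx`.
-/

open Real Set MeasureTheory intervalIntegral
open scoped Nat

lemma poch_succ (x : ℝ) (n : ℕ) : poch x (n + 1) = poch x n * (x + n) :=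
  Finset.prod_range_succ _ _

lemma poch_one (n : ℕ) : poch 1 n = n ! := by
  induction n with
  | zero => simp [poch]
  | succ n ih => rw [poch_succ, ih, Nat.factorial_succ]; push_cast; ring

lemma poch_two (n : ℕ) : poch 2 n = (n + 1)! := by
  induction n with
  | zero => simp [poch]
  | succ n ih => rw [poch_succ, ih, Nat.factorial_succ (n + 1)]; push_cast; ring

lemma poch_three_halves (n : ℕ) : poch (3 / 2) n = (2 * n + 1)! / (4 ^ n * n !) := by
  induction n with
  | zero => simp [poch]
  | succ n ih =>
    rw [poch_succ, ih, show 2 * (n + 1) + 1 = 2 * n + 1 + 1 + 1 by ring,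
      Nat.factorial_succ (2 * n + 1 + 1), Nat.factorial_succ (2 * n + 1), Nat.factorial_succ n]
    push_cast
    field_simp
    ring

/-- The Wallis integral `∫₀^{π/2} sin^{2n+1} x dx` in closed form. -/
noncomputable def wallisCoeff (n : ℕ) : ℝ := 4 ^ n * (n ! : ℝ) ^ 2 / (2 * n + 1)!

lemma wallisCoeff_pos (n : ℕ) : 0 < wallisCoeff n := by
  unfold wallisCoeff; positivity

lemma wallisCoeff_succ (n : ℕ) :
    wallisCoeff (n + 1) = (2 * n + 2) / (2 * n + 3) * wallisCoeff n := by
  rw [wallisCoeff, wallisCoeff, show 2 * (n + 1) + 1 = 2 * n + 1 + 1 + 1 by ring,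
    Nat.factorial_succ (2 * n + 1 + 1), Nat.factorial_succ (2 * n + 1), Nat.factorial_succ n]
  push_cast
  field_simp
  ring

lemma hyp_term_eq (r n : ℕ) :
    ((List.replicate (r + 3) (1 : ℝ)).map fun x => poch x n).prod /
        (((3 / 2) :: List.replicate (r + 1) (2 : ℝ)).map fun x => poch x n).prod
        * 1 ^ n / (n ! : ℝ) =
      wallisCoeff n / ((n : ℝ) + 1) ^ (r + 1) := by
  simp only [List.map_replicate, List.map_cons, List.prod_replicate, List.prod_cons, poch_one,
    poch_two, poch_three_halves, one_pow, mul_one, wallisCoeff, Nat.factorial_succ n]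
  push_cast
  simp only [mul_pow]
  field_simp
  ring

lemma wallisCoeff_sq_mul (n : ℕ) : wallisCoeff n ^ 2 * (2 * n + 1) = Wallis.W n := by
  rw [Wallis.W_eq_factorial_ratio, wallisCoeff, Nat.factorial_succ (2 * n), pow_mul]
  push_cast
  field_simp
  rw [← pow_mul, mul_comm, pow_mul]; norm_num

lemma integral_sin_pow_odd_eq_wallisCoeff (n : ℕ) :
    ∫ x in (0 : ℝ)..π / 2, sin x ^ (2 * n + 1) = wallisCoeff n := by
  induction n with
  | zero => simp [wallisCoeff]
  | succ n ih =>
    rw [show 2 * (n + 1) + 1 = 2 * n + 1 + 2 by ring, integral_sin_pow, ih, wallisCoeff_succ]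
    rw [sin_zero, cos_pi_div_two, zero_pow (by omega), zero_mul, mul_zero, sub_zero, zero_div,
      zero_add]
    push_cast
    ring

lemma wallisCoeff_le_sqrt (n : ℕ) : wallisCoeff n ≤ √(2 / ((n : ℝ) + 1)) := by
  have hW : wallisCoeff n ^ 2 * (2 * n + 1) ≤ π / 2 := wallisCoeff_sq_mul n ▸ Wallis.W_le n
  refine Real.le_sqrt_of_sq_le ?_
  rw [le_div_iff₀ (by positivity)]
  nlinarith [pi_lt_four, sq_nonneg (wallisCoeff n), (n.cast_nonneg : (0 : ℝ) ≤ n)]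

lemma summable_wallisCoeff_div_pow (r : ℕ) :
    Summable fun n : ℕ => wallisCoeff n / ((n : ℝ) + 1) ^ (r + 1) := by
  have hp : Summable fun n : ℕ => ((n : ℝ) + 1) ^ (-(3 / 2 : ℝ)) := by
    simpa using (summable_nat_add_iff 1).2
      (Real.summable_nat_rpow.2 (by norm_num : -(3 / 2 : ℝ) < -1))
  refine (hp.mul_left √2).of_nonneg_of_le (fun n => by have := wallisCoeff_pos n; positivity)
    fun n => ?_
  have hx : (0 : ℝ) < n + 1 := by positivity
  calc wallisCoeff n / ((n : ℝ) + 1) ^ (r + 1) ≤ wallisCoeff n / ((n : ℝ) + 1) := by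
        gcongr
        · exact (wallisCoeff_pos n).le
        · exact le_self_pow₀ (by linarith [(n.cast_nonneg : (0 : ℝ) ≤ n)]) (by omega)
    _ ≤ √(2 / ((n : ℝ) + 1)) / ((n : ℝ) + 1) := by gcongr; exact wallisCoeff_le_sqrt n
    _ = √2 * ((n : ℝ) + 1) ^ (-(3 / 2 : ℝ)) := by
        rw [Real.rpow_neg hx.le, show (3 / 2 : ℝ) = 1 + 1 / 2 by norm_num, Real.rpow_add hx,
          Real.rpow_one, ← Real.sqrt_eq_rpow, Real.sqrt_div' _ hx.le]
        field_simp

lemma sin_mem_Ioo_of_mem_Ioo {θ : ℝ} (hθ : θ ∈ Ioo 0 (π / 2)) : sin θ ∈ Ioo 0 1 := by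
  refine ⟨sin_pos_of_pos_of_lt_pi hθ.1 (by linarith [hθ.2, pi_pos]), ?_⟩
  rw [← sin_pi_div_two]
  exact strictMonoOn_sin ⟨by linarith [hθ.1, pi_pos], hθ.2.le⟩
    ⟨by linarith [pi_pos], le_rfl⟩ hθ.2

lemma cos_pos_of_mem_Ioo_zero_pi_div_two {θ : ℝ} (hθ : θ ∈ Ioo 0 (π / 2)) : 0 < cos θ :=
  cos_pos_of_mem_Ioo ⟨by linarith [hθ.1, pi_pos], hθ.2⟩

lemma integral_sin_div_one_sub_sin_sq_mul_sin_sq {θ : ℝ} (hθ : θ ∈ Ioo 0 (π / 2)) :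
    ∫ x in (0 : ℝ)..π / 2, sin x / (1 - sin θ ^ 2 * sin x ^ 2) = θ / (sin θ * cos θ) := by
  have hs := (sin_mem_Ioo_of_mem_Ioo hθ).1
  have hc := cos_pos_of_mem_Ioo_zero_pi_div_two hθ
  have hden : ∀ x, 1 - sin θ ^ 2 * sin x ^ 2 = cos θ ^ 2 + sin θ ^ 2 * cos x ^ 2 := fun x => by
    linear_combination -(sin_sq_add_cos_sq θ) - sin θ ^ 2 * sin_sq_add_cos_sq x
  have hden_pos : ∀ x, 0 < 1 - sin θ ^ 2 * sin x ^ 2 := fun x => by rw [hden]; positivity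
  have hderiv : ∀ x ∈ uIcc 0 (π / 2), HasDerivAt
      (fun x => -arctan (tan θ * cos x) / (sin θ * cos θ))
      (sin x / (1 - sin θ ^ 2 * sin x ^ 2)) x := fun x _ => by
    refine ((((hasDerivAt_cos x).const_mul (tan θ)).arctan.neg).div_const _).congr_deriv ?_
    rw [tan_eq_sin_div_cos, hden]
    field_simp
  rw [integral_eq_sub_of_hasDerivAt hderiv (Continuous.intervalIntegrable (by
    exact continuous_sin.div (by fun_prop) fun x => (hden_pos x).ne') _ _)]
  simp only [cos_pi_div_two, mul_zero, arctan_zero, cos_zero, mul_one,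
    arctan_tan (by linarith [hθ.1, pi_pos]) hθ.2]
  ring

lemma hasSum_wallisCoeff_mul_sin_sq_pow {θ : ℝ} (hθ : θ ∈ Ioo 0 (π / 2)) :
    HasSum (fun n => wallisCoeff n * sin θ ^ (2 * n)) (θ / (sin θ * cos θ)) := by
  obtain ⟨hs, hs1⟩ := sin_mem_Ioo_of_mem_Ioo hθ
  have hq : sin θ ^ 2 < 1 := pow_lt_one₀ hs.le hs1 two_ne_zero
  have hterm : ∀ n, wallisCoeff n * sin θ ^ (2 * n) =
      ∫ x in (0 : ℝ)..π / 2, sin x ^ (2 * n + 1) * sin θ ^ (2 * n) := fun n => by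
    rw [intervalIntegral.integral_mul_const, integral_sin_pow_odd_eq_wallisCoeff]
  simp_rw [hterm, ← integral_sin_div_one_sub_sin_sq_mul_sin_sq hθ]
  refine intervalIntegral.hasSum_integral_of_dominated_convergence (fun n _ => sin θ ^ (2 * n))
    (fun n => by fun_prop) (fun n => Eventually.of_forall fun x _ => ?_)
    (Eventually.of_forall fun _ _ => ?_) intervalIntegrable_const
    (Eventually.of_forall fun x _ => ?_)
  · rw [norm_mul, norm_pow, norm_pow, Real.norm_eq_abs, Real.norm_eq_abs, abs_of_pos hs]
    exact mul_le_of_le_one_left (by positivity) (pow_le_one₀ (abs_nonneg _) (abs_sin_le_one x))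
  · simp_rw [pow_mul]
    exact summable_geometric_of_lt_one (sq_nonneg _) hq
  · have hx : sin θ ^ 2 * sin x ^ 2 < 1 := by nlinarith [sin_sq_le_one x, sq_nonneg (sin x)]
    rw [div_eq_mul_inv]
    exact ((hasSum_geometric_of_lt_one (by positivity) hx).mul_left (sin x)).congr_fun
      fun n => by ring

lemma integrableOn_pow_mul_exp_neg_mul (r : ℕ) {a : ℝ} (ha : 0 < a) :
    IntegrableOn (fun u => u ^ r * exp (-(a * u))) (Ioi 0) := by
  refine (integrableOn_rpow_mul_exp_neg_mul_rpow (s := r) (by linarith [r.cast_nonneg (α := ℝ)])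
    one_pos ha).congr_fun (fun u _ => ?_) measurableSet_Ioi
  simp only [rpow_natCast, rpow_one, neg_mul]

lemma integral_pow_mul_exp_neg_mul_Ioi (r : ℕ) {a : ℝ} (ha : 0 < a) :
    ∫ u in Ioi 0, u ^ r * exp (-(a * u)) = r ! / a ^ (r + 1) := by
  have h := integral_rpow_mul_exp_neg_mul_Ioi (a := r + 1) (by positivity) ha
  simp only [add_sub_cancel_right, rpow_natCast] at h
  rw [h, Gamma_nat_eq_factorial, ← Nat.cast_add_one, rpow_natCast, one_div, inv_pow,
    inv_mul_eq_div]

lemma strictAntiOn_neg_log_sin : StrictAntiOn (fun θ => -log (sin θ)) (Ioo 0 (π / 2)) :=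
  fun a ha b hb hab => neg_lt_neg <| log_lt_log (sin_mem_Ioo_of_mem_Ioo ha).1 <|
    strictMonoOn_sin ⟨by linarith [ha.1, pi_pos], ha.2.le⟩
      ⟨by linarith [hb.1, pi_pos], hb.2.le⟩ hab

lemma image_neg_log_sin : (fun θ => -log (sin θ)) '' Ioo 0 (π / 2) = Ioi 0 := by
  ext u
  constructor
  · rintro ⟨θ, hθ, rfl⟩
    obtain ⟨h0, h1⟩ := sin_mem_Ioo_of_mem_Ioo hθ
    exact neg_pos.2 (log_neg h0 h1)
  · intro hu
    have h1 : exp (-u) < 1 := exp_lt_one_iff.2 (neg_neg_of_pos hu)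
    refine ⟨arcsin (exp (-u)), ⟨arcsin_pos.2 (exp_pos _), arcsin_lt_pi_div_two.2 h1⟩, ?_⟩
    simp only [sin_arcsin (by linarith [exp_pos (-u)]) h1.le, log_exp, neg_neg]

lemma hasDerivWithinAt_neg_log_sin {θ : ℝ} (hθ : θ ∈ Ioo 0 (π / 2)) :
    HasDerivWithinAt (fun θ => -log (sin θ)) (-(cos θ / sin θ)) (Ioo 0 (π / 2)) θ :=
  ((hasDerivAt_sin θ).log (sin_mem_Ioo_of_mem_Ioo hθ).1.ne').neg.hasDerivWithinAt

lemma abs_neg_cos_div_sin {θ : ℝ} (hθ : θ ∈ Ioo 0 (π / 2)) :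
    |-(cos θ / sin θ)| = cos θ / sin θ := by
  rw [abs_neg, abs_of_pos (div_pos (cos_pos_of_mem_Ioo_zero_pi_div_two hθ)
    (sin_mem_Ioo_of_mem_Ioo hθ).1)]

lemma integrableOn_Ioi_iff_comp_neg_log_sin (g : ℝ → ℝ) :
    IntegrableOn g (Ioi 0) ↔
      IntegrableOn (fun θ => cos θ / sin θ * g (-log (sin θ))) (Ioo 0 (π / 2)) := by
  rw [← image_neg_log_sin, integrableOn_image_iff_integrableOn_abs_deriv_smul measurableSet_Ioo
    (fun θ hθ => hasDerivWithinAt_neg_log_sin hθ) strictAntiOn_neg_log_sin.injOn]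
  exact integrableOn_congr_fun (fun θ hθ => by rw [smul_eq_mul, abs_neg_cos_div_sin hθ])
    measurableSet_Ioo

lemma integral_Ioi_eq_integral_comp_neg_log_sin (g : ℝ → ℝ) :
    ∫ u in Ioi 0, g u = ∫ θ in Ioo 0 (π / 2), cos θ / sin θ * g (-log (sin θ)) := by
  rw [← image_neg_log_sin, integral_image_eq_integral_abs_deriv_smul measurableSet_Ioo
    (fun θ hθ => hasDerivWithinAt_neg_log_sin hθ) strictAntiOn_neg_log_sin.injOn]
  exact setIntegral_congr_fun measurableSet_Ioo fun θ hθ => by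
    rw [smul_eq_mul, abs_neg_cos_div_sin hθ]

lemma cos_div_sin_mul_pow_mul_exp {θ : ℝ} (hθ : θ ∈ Ioo 0 (π / 2)) (n r : ℕ) :
    cos θ / sin θ * ((-log (sin θ)) ^ r * exp (-(((n : ℝ) + 1) * -log (sin θ)))) =
      sin θ ^ n * cos θ * (-log (sin θ)) ^ r := by
  have hs := (sin_mem_Ioo_of_mem_Ioo hθ).1
  rw [show -(((n : ℝ) + 1) * -log (sin θ)) = log (sin θ) * ((n + 1 : ℕ) : ℝ) by
    push_cast; ring, ← rpow_def_of_pos hs, rpow_natCast, pow_succ]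
  field_simp

lemma integrableOn_sin_pow_mul_cos_mul_neg_log_sin_pow (n r : ℕ) :
    IntegrableOn (fun θ => sin θ ^ n * cos θ * (-log (sin θ)) ^ r) (Ioo 0 (π / 2)) :=
  ((integrableOn_Ioi_iff_comp_neg_log_sin _).1 (integrableOn_pow_mul_exp_neg_mul r
    (a := n + 1) (by positivity))).congr_fun (fun θ hθ => cos_div_sin_mul_pow_mul_exp hθ n r)
    measurableSet_Ioo

lemma integral_sin_pow_mul_cos_mul_neg_log_sin_pow (n r : ℕ) :
    ∫ θ in Ioo 0 (π / 2), sin θ ^ n * cos θ * (-log (sin θ)) ^ r =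
      r ! / ((n : ℝ) + 1) ^ (r + 1) := by
  rw [← integral_pow_mul_exp_neg_mul_Ioi r (by positivity),
    integral_Ioi_eq_integral_comp_neg_log_sin]
  exact setIntegral_congr_fun measurableSet_Ioo fun θ hθ =>
    (cos_div_sin_mul_pow_mul_exp hθ n r).symm

lemma neg_log_sin_nonneg {θ : ℝ} (hθ : θ ∈ Ioo 0 (π / 2)) : 0 ≤ -log (sin θ) :=
  neg_nonneg.2 (log_nonpos (sin_mem_Ioo_of_mem_Ioo hθ).1.le (sin_mem_Ioo_of_mem_Ioo hθ).2.le)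

lemma hasSum_wallisCoeff_mul_sin_pow_mul_cos {θ : ℝ} (hθ : θ ∈ Ioo 0 (π / 2)) (r : ℕ) :
    HasSum (fun n => wallisCoeff n * (sin θ ^ (2 * n + 1) * cos θ * (-log (sin θ)) ^ r))
      (θ * (-log (sin θ)) ^ r) := by
  have hs := (sin_mem_Ioo_of_mem_Ioo hθ).1
  have hc := cos_pos_of_mem_Ioo_zero_pi_div_two hθ
  have h := (hasSum_wallisCoeff_mul_sin_sq_pow hθ).mul_right
    (sin θ * cos θ * (-log (sin θ)) ^ r)
  rw [show θ / (sin θ * cos θ) * (sin θ * cos θ * (-log (sin θ)) ^ r) =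
    θ * (-log (sin θ)) ^ r by field_simp] at h
  exact h.congr_fun fun n => by ring

lemma hasSum_integral_mul_neg_log_sin_pow (r : ℕ) :
    HasSum (fun n => r ! / (2 : ℝ) ^ (r + 1) * (wallisCoeff n / ((n : ℝ) + 1) ^ (r + 1)))
      (∫ θ in Ioo 0 (π / 2), θ * (-log (sin θ)) ^ r) := by
  set F : ℕ → ℝ → ℝ := fun n θ =>
    wallisCoeff n * (sin θ ^ (2 * n + 1) * cos θ * (-log (sin θ)) ^ r)
  have hF_int : ∀ n, IntegrableOn (F n) (Ioo 0 (π / 2)) := fun n =>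
    (integrableOn_sin_pow_mul_cos_mul_neg_log_sin_pow _ r).const_mul _
  have hF_integral : ∀ n, ∫ θ in Ioo 0 (π / 2), F n θ =
      r ! / (2 : ℝ) ^ (r + 1) * (wallisCoeff n / ((n : ℝ) + 1) ^ (r + 1)) := fun n => by
    rw [MeasureTheory.integral_const_mul, integral_sin_pow_mul_cos_mul_neg_log_sin_pow,
      Nat.cast_add_one, Nat.cast_mul, Nat.cast_two,
      show (2 : ℝ) * n + 1 + 1 = 2 * (n + 1) by ring, mul_pow]
    field_simp
  have hF_norm : ∀ n, ∫ θ in Ioo 0 (π / 2), ‖F n θ‖ = ∫ θ in Ioo 0 (π / 2), F n θ :=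
    fun n => setIntegral_congr_fun measurableSet_Ioo fun θ hθ => Real.norm_of_nonneg <| by
      have := (sin_mem_Ioo_of_mem_Ioo hθ).1
      have := cos_pos_of_mem_Ioo_zero_pi_div_two hθ
      have := neg_log_sin_nonneg hθ
      have := wallisCoeff_pos n
      positivity
  have h := hasSum_integral_of_summable_integral_norm hF_int <| by
    simp_rw [hF_norm, hF_integral]
    exact (summable_wallisCoeff_div_pow r).mul_left _
  simp_rw [hF_integral] at h
  rwa [setIntegral_congr_fun measurableSet_Ioo
    fun θ hθ => (hasSum_wallisCoeff_mul_sin_pow_mul_cos hθ r).tsum_eq] at h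

lemma integrableOn_mul_neg_log_sin_pow (r : ℕ) :
    IntegrableOn (fun θ => θ * (-log (sin θ)) ^ r) (Ioo 0 (π / 2)) := by
  have h := hasSum_integral_mul_neg_log_sin_pow r
  -- a non-integrable function has Bochner integral `0`, whereas this one is a sum of positive terms
  refine Integrable.of_integral_ne_zero (h.tsum_eq ▸ (h.summable.tsum_pos (fun n => ?_) 0 ?_).ne')
  · have := wallisCoeff_pos n; positivity
  · have := wallisCoeff_pos 0; positivity

lemma mul_pow_eq_neg_one_pow_mul_mul_neg_pow (x y : ℝ) (r : ℕ) :
    x * y ^ r = (-1) ^ r * (x * (-y) ^ r) := by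
  have h : ((-1 : ℝ)) ^ r * (-1) ^ r = 1 := by rw [← mul_pow]; norm_num
  rw [neg_pow y]
  linear_combination (-(x * y ^ r)) * h

lemma intervalIntegrable_mul_log_sin_pow (k : ℕ) :
    IntervalIntegrable (fun x => x * log (sin x) ^ k) volume 0 (π / 2) := by
  rw [intervalIntegrable_iff_integrableOn_Ioo_of_le (by positivity)]
  exact IntegrableOn.congr_fun ((integrableOn_mul_neg_log_sin_pow k).const_mul _)
    (fun x _ => (mul_pow_eq_neg_one_pow_mul_mul_neg_pow _ _ k).symm) measurableSet_Ioo

lemma integral_mul_log_sin_pow (r : ℕ) :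
    ∫ x in (0 : ℝ)..π / 2, x * log (sin x) ^ r =
      (-1) ^ r * ∫ θ in Ioo 0 (π / 2), θ * (-log (sin θ)) ^ r := by
  rw [integral_of_le (by positivity), integral_Ioc_eq_integral_Ioo,
    ← MeasureTheory.integral_const_mul]
  simp_rw [← mul_pow_eq_neg_one_pow_mul_mul_neg_pow]

lemma intervalIntegrable_mul_add_log_sin_pow (a : ℝ) (j : ℕ) :
    IntervalIntegrable (fun x => x * (a + log (sin x)) ^ j) volume 0 (π / 2) := by
  have h : (fun x => x * (a + log (sin x)) ^ j) =
      ∑ i ∈ Finset.range (j + 1),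
        fun x => x * log (sin x) ^ (j - i) * (a ^ i * j.choose i) := by
    ext x
    rw [Finset.sum_apply, add_pow, Finset.mul_sum]
    exact Finset.sum_congr rfl fun i _ => by ring
  rw [h]
  exact IntervalIntegrable.sum _ fun i _ => (intervalIntegrable_mul_log_sin_pow (j - i)).mul_const _

lemma sum_choose_mul_integral_mul_add_log_sin_pow (a : ℝ) (r : ℕ) :
    ∑ j ∈ Finset.range (r + 1), (r.choose j : ℝ) * (-a) ^ (r - j) *
        ∫ x in (0 : ℝ)..π / 2, x * (a + log (sin x)) ^ j =
      ∫ x in (0 : ℝ)..π / 2, x * log (sin x) ^ r := by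
  simp_rw [← intervalIntegral.integral_const_mul]
  rw [← integral_finsetSum fun j _ =>
    (intervalIntegrable_mul_add_log_sin_pow a j).const_mul ((r.choose j : ℝ) * (-a) ^ (r - j))]
  refine integral_congr fun x _ => ?_
  rw [show log (sin x) = (a + log (sin x)) + -a by ring, add_pow, Finset.mul_sum]
  exact Finset.sum_congr rfl fun j _ => by ring

lemma integral_mul_log_two_mul_sin_pow (j : ℕ) :
    ∫ x in (0 : ℝ)..π / 2, x * log (2 * sin x) ^ j =
      ∫ x in (0 : ℝ)..π / 2, x * (log 2 + log (sin x)) ^ j := by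
  refine integral_congr_ae (Eventually.of_forall fun x hx => ?_)
  rw [uIoc_of_le (by positivity)] at hx
  rw [log_mul two_ne_zero (sin_pos_of_pos_of_lt_pi hx.1 (by linarith [hx.2, pi_pos])).ne']

/-- For every `r ≥ 0`,
`₍ᵣ₊₃₎F₍ᵣ₊₂₎({1}_{r+3}; 3/2, {2}_{r+1}; 1)
  = (2^{r+1}(−1)^r/r!) Σ_{j=0}^r (r choose j)(−log 2)^{r−j} ∫₀^{π/2} x logʲ(2 sin x) dx`. -/
theorem logsine_rep (r : ℕ) :
    hyp (List.replicate (r + 3) (1 : ℝ)) ((3 / 2) :: List.replicate (r + 1) (2 : ℝ)) 1 =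
      2 ^ (r + 1) * (-1) ^ r / (r.factorial : ℝ) *
        ∑ j ∈ Finset.range (r + 1), (r.choose j : ℝ) * (-Real.log 2) ^ (r - j) *
          ∫ x in (0:ℝ)..(π / 2), x * Real.log (2 * Real.sin x) ^ j := by
  have hJ := (hasSum_integral_mul_neg_log_sin_pow r).tsum_eq
  rw [tsum_mul_left] at hJ
  simp_rw [hyp, hyp_term_eq, integral_mul_log_two_mul_sin_pow,
    sum_choose_mul_integral_mul_add_log_sin_pow, integral_mul_log_sin_pow, ← hJ]
  field_simp
  rw [← pow_mul, mul_comm r, pow_mul, neg_one_sq, one_pow, mul_one]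
end

section
/- For every real m > 0, ∫₀¹ K(1−x) · x^{m−1} dx = π Γ(m)² / (2 Γ(m + 1/2)²). -/
open scoped Real
open MeasureTheory Set Function ProbabilityTheory

/-!
The substitution `u = 1 - (1 - x) sin² θ` gives
`K(1 - x) = ½ ∫ₓ¹ (u (1 - u) (u - x))^{-1/2} du`. Exchanging the order of integration over the
triangle `0 < x < u < 1`, the inner integral `∫₀ᵘ x^{m-1} (u - x)^{-1/2} dx = B(m, ½) u^{m-1/2}`
is a scaled Beta integral, so the whole integral is
`½ B(m, ½) ∫₀¹ u^{m-1} (1 - u)^{-1/2} du = ½ B(m, ½)²`, and `B(m, ½) = Γ(m) √π / Γ(m + ½)`.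
-/

/-- The complete elliptic integral of the first kind, in the parameter
(`m = k²`) convention: `K(m) = ∫₀^{π/2} (1 − m sin²θ)^{−1/2} dθ`. -/
noncomputable def ellipticK (m : ℝ) : ℝ :=
  ∫ θ in (0:ℝ)..(π / 2), (1 - m * Real.sin θ ^ 2) ^ (-(1:ℝ) / 2)

theorem integral_Ioo_rpow_mul_sub_rpow {a b s : ℝ} (ha : 0 < a) (hb : 0 < b) (hs : 0 < s) :
    ∫ x in Ioo 0 s, x ^ (a - 1) * (s - x) ^ (b - 1) = s ^ (a + b - 1) * beta a b := by
  have hcpow : ∀ x ∈ Ioo 0 s, ((x ^ (a - 1) * (s - x) ^ (b - 1) : ℝ) : ℂ)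
      = (x : ℂ) ^ ((a : ℂ) - 1) * ((s : ℂ) - x) ^ ((b : ℂ) - 1) := fun x hx => by
    rw [Complex.ofReal_mul, Complex.ofReal_cpow hx.1.le, Complex.ofReal_cpow (sub_pos.2 hx.2).le]
    push_cast; rfl
  have hcomplex := Complex.betaIntegral_scaled a b hs
  rw [intervalIntegral.integral_of_le hs.le, integral_Ioc_eq_integral_Ioo,
    ← setIntegral_congr_fun measurableSet_Ioo hcpow, integral_complex_ofReal,
    Complex.betaIntegral_eq_Gamma_mul_div _ _ (by simpa) (by simpa),
    ← Complex.ofReal_add, Complex.Gamma_ofReal, Complex.Gamma_ofReal, Complex.Gamma_ofReal,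
    show ((a + b : ℝ) : ℂ) - 1 = ((a + b - 1 : ℝ) : ℂ) by push_cast; rfl,
    ← Complex.ofReal_cpow hs.le] at hcomplex
  exact_mod_cast hcomplex

theorem integrableOn_Ioo_rpow_mul_sub_rpow {a b s : ℝ} (ha : 0 < a) (hb : 0 < b) (hs : 0 < s) :
    IntegrableOn (fun x => x ^ (a - 1) * (s - x) ^ (b - 1)) (Ioo 0 s) := by
  by_contra h
  have hvalue := integral_Ioo_rpow_mul_sub_rpow ha hb hs
  rw [integral_undef h] at hvalue
  exact (mul_pos (Real.rpow_pos_of_pos hs _) (beta_pos ha hb)).ne hvalue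

theorem rpow_neg_half_mul_sq {p q : ℝ} (hp : 0 ≤ p) (hq : 0 < q) :
    (p * q ^ 2) ^ (-(1:ℝ) / 2) = p ^ (-(1:ℝ) / 2) / q := by
  rw [Real.mul_rpow hp (sq_nonneg q), ← Real.rpow_natCast, ← Real.rpow_mul hq.le,
    show ((2 : ℕ) : ℝ) * (-1 / 2) = -1 by norm_num, Real.rpow_neg_one, ← div_eq_mul_inv]

theorem strictAntiOn_one_sub_mul_sin_sq {c : ℝ} (hc : 0 < c) :
    StrictAntiOn (fun θ => 1 - c * Real.sin θ ^ 2) (Icc 0 (π / 2)) := by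
  intro θ hθ φ hφ hlt
  have hsin : Real.sin θ < Real.sin φ :=
    Real.strictMonoOn_sin ⟨by linarith [hθ.1, Real.pi_pos], hθ.2⟩
      ⟨by linarith [hφ.1, Real.pi_pos], hφ.2⟩ hlt
  have hsin0 : 0 ≤ Real.sin θ :=
    Real.sin_nonneg_of_nonneg_of_le_pi hθ.1 (by linarith [hθ.2, Real.pi_pos])
  have : Real.sin θ ^ 2 < Real.sin φ ^ 2 := pow_lt_pow_left₀ hsin hsin0 two_ne_zero
  dsimp only
  nlinarith

theorem ellipticK_one_sub_eq_integral {x : ℝ} (hx0 : 0 < x) (hx1 : x < 1) :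
    ellipticK (1 - x) = (1 / 2) * ∫ u in Ioo x 1, (u * (1 - u) * (u - x)) ^ (-(1:ℝ) / 2) := by
  set φ : ℝ → ℝ := fun θ => 1 - (1 - x) * Real.sin θ ^ 2 with hφ
  have hanti : StrictAntiOn φ (Icc 0 (π / 2)) := strictAntiOn_one_sub_mul_sin_sq (by linarith)
  have himage : φ '' Ioo 0 (π / 2) = Ioo x 1 := by
    rw [ContinuousOn.image_Ioo_of_strictAntiOn (by positivity) (by fun_prop) hanti]
    simp [φ]
  have hderiv : ∀ θ ∈ Ioo 0 (π / 2),
      HasDerivWithinAt φ (-((1 - x) * (2 * Real.sin θ * Real.cos θ))) (Ioo 0 (π / 2)) θ := by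
    intro θ _
    exact (((((Real.hasDerivAt_sin θ).fun_pow 2).const_mul (1 - x)).const_sub 1).congr_deriv
      (by norm_num)).hasDerivWithinAt
  rw [← himage, integral_image_eq_integral_abs_deriv_smul measurableSet_Ioo hderiv
    (hanti.injOn.mono Ioo_subset_Icc_self), ellipticK, intervalIntegral.integral_of_le
    (by positivity), integral_Ioc_eq_integral_Ioo, ← integral_const_mul]
  refine setIntegral_congr_fun measurableSet_Ioo fun θ ⟨hθ0, hθ1⟩ => ?_
  have hsin : 0 < Real.sin θ := Real.sin_pos_of_pos_of_lt_pi hθ0 (by linarith)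
  have hcos : 0 < Real.cos θ := Real.cos_pos_of_mem_Ioo ⟨by linarith, hθ1⟩
  have hφpos : 0 < φ θ := by
    have := Real.sin_sq_le_one θ
    simp only [hφ]; nlinarith
  have h1x : 0 < 1 - x := by linarith
  have hq : 0 < (1 - x) * Real.sin θ * Real.cos θ := by positivity
  -- `1 - φ θ = (1 - x) sin² θ` and `φ θ - x = (1 - x) cos² θ`
  have hprod :
      φ θ * (1 - φ θ) * (φ θ - x) = φ θ * ((1 - x) * Real.sin θ * Real.cos θ) ^ 2 := by
    simp only [hφ]
    linear_combination
      (-(1 - (1 - x) * Real.sin θ ^ 2) * (1 - x) ^ 2 * Real.sin θ ^ 2) * Real.sin_sq_add_cos_sq θ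
  rw [smul_eq_mul, hprod, rpow_neg_half_mul_sq hφpos.le hq,
    abs_of_neg (by nlinarith : -((1 - x) * (2 * Real.sin θ * Real.cos θ)) < 0)]
  show φ θ ^ _ = _
  field_simp

def openTriangle (a b : ℝ) : Set (ℝ × ℝ) := {p | a < p.1 ∧ p.1 < p.2 ∧ p.2 < b}

theorem measurableSet_openTriangle (a b : ℝ) : MeasurableSet (openTriangle a b) :=
  (measurableSet_lt measurable_const measurable_fst).inter
    ((measurableSet_lt measurable_fst measurable_snd).inter
      (measurableSet_lt measurable_snd measurable_const))

section OpenTriangle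

variable {a b : ℝ} {f : ℝ → ℝ → ℝ}

theorem indicator_openTriangle_eq_fst (x u : ℝ) :
    (openTriangle a b).indicator (uncurry f) (x, u)
      = (Ioo a b).indicator (fun x => (Ioo x b).indicator (f x) u) x := by
  simp only [openTriangle, indicator_apply, mem_ofPred_eq, mem_Ioo, uncurry_apply_pair]
  split_ifs <;> grind

theorem indicator_openTriangle_eq_snd (x u : ℝ) :
    (openTriangle a b).indicator (uncurry f) (x, u)
      = (Ioo a b).indicator (fun u => (Ioo a u).indicator (f · u) x) u := by
  simp only [openTriangle, indicator_apply, mem_ofPred_eq, mem_Ioo, uncurry_apply_pair]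
  split_ifs <;> grind

theorem integral_indicator_openTriangle_fst (x : ℝ) :
    ∫ u, (openTriangle a b).indicator (uncurry f) (x, u)
      = (Ioo a b).indicator (fun x => ∫ u in Ioo x b, f x u) x := by
  by_cases hx : x ∈ Ioo a b
  · simp [indicator_openTriangle_eq_fst, indicator_of_mem hx,
      integral_indicator measurableSet_Ioo]
  · simp [indicator_openTriangle_eq_fst, indicator_of_notMem hx]

theorem integral_indicator_openTriangle_snd (u : ℝ) :
    ∫ x, (openTriangle a b).indicator (uncurry f) (x, u)
      = (Ioo a b).indicator (fun u => ∫ x in Ioo a u, f x u) u := by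
  by_cases hu : u ∈ Ioo a b
  · simp [indicator_openTriangle_eq_snd, indicator_of_mem hu,
      integral_indicator measurableSet_Ioo]
  · simp [indicator_openTriangle_eq_snd, indicator_of_notMem hu]

theorem integrable_indicator_openTriangle_of_nonneg
    (hf : Measurable (uncurry f)) (hf0 : ∀ x u, a < x → x < u → u < b → 0 ≤ f x u)
    (hslice : ∀ u ∈ Ioo a b, IntegrableOn (f · u) (Ioo a u))
    (hint : IntegrableOn (fun u => ∫ x in Ioo a u, f x u) (Ioo a b)) :
    Integrable ((openTriangle a b).indicator (uncurry f)) (volume.prod volume) := by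
  rw [integrable_prod_iff' (hf.indicator (measurableSet_openTriangle a b)).aestronglyMeasurable]
  constructor
  · refine ae_of_all _ fun u => ?_
    simp only [indicator_openTriangle_eq_snd]
    by_cases hu : u ∈ Ioo a b
    · simpa [indicator_of_mem hu, integrable_indicator_iff measurableSet_Ioo] using hslice u hu
    · simp [indicator_of_notMem hu]
  · refine (hint.integrable_indicator measurableSet_Ioo).congr (ae_of_all _ fun u => ?_)
    simp only [indicator_openTriangle_eq_snd]
    by_cases hu : u ∈ Ioo a b
    · simp only [indicator_of_mem hu]
      rw [← integral_indicator measurableSet_Ioo]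
      refine integral_congr_ae (ae_of_all _ fun x => ?_)
      by_cases hx : x ∈ Ioo a u
      · simp [indicator_of_mem hx, abs_of_nonneg (hf0 x u hx.1 hx.2 hu.2)]
      · simp [indicator_of_notMem hx]
    · simp [indicator_of_notMem hu]

theorem integral_Ioo_integral_Ioo_swap_of_nonneg
    (hf : Measurable (uncurry f)) (hf0 : ∀ x u, a < x → x < u → u < b → 0 ≤ f x u)
    (hslice : ∀ u ∈ Ioo a b, IntegrableOn (f · u) (Ioo a u))
    (hint : IntegrableOn (fun u => ∫ x in Ioo a u, f x u) (Ioo a b)) :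
    ∫ x in Ioo a b, ∫ u in Ioo x b, f x u = ∫ u in Ioo a b, ∫ x in Ioo a u, f x u := by
  calc ∫ x in Ioo a b, ∫ u in Ioo x b, f x u
      = ∫ x, ∫ u, (openTriangle a b).indicator (uncurry f) (x, u) := by
        simp_rw [integral_indicator_openTriangle_fst, integral_indicator measurableSet_Ioo]
    _ = ∫ u, ∫ x, (openTriangle a b).indicator (uncurry f) (x, u) :=
        integral_integral_swap (integrable_indicator_openTriangle_of_nonneg hf hf0 hslice hint)
    _ = ∫ u in Ioo a b, ∫ x in Ioo a u, f x u := by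
        simp_rw [integral_indicator_openTriangle_snd, integral_indicator measurableSet_Ioo]

end OpenTriangle

theorem rpow_mul_rpow_neg_half_eq {m u x : ℝ} (hu0 : 0 < u) (hu1 : u < 1) (hxu : x < u) :
    x ^ (m - 1) * (u * (1 - u) * (u - x)) ^ (-(1:ℝ) / 2)
      = (u * (1 - u)) ^ (-(1:ℝ) / 2) * (x ^ (m - 1) * (u - x) ^ ((1:ℝ) / 2 - 1)) := by
  rw [Real.mul_rpow (by nlinarith) (by linarith), show (1:ℝ) / 2 - 1 = -1 / 2 by norm_num]
  ring

theorem integrableOn_Ioo_rpow_mul_rpow_neg_half {m u : ℝ} (hm : 0 < m) (hu0 : 0 < u)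
    (hu1 : u < 1) :
    IntegrableOn (fun x => x ^ (m - 1) * (u * (1 - u) * (u - x)) ^ (-(1:ℝ) / 2)) (Ioo 0 u) :=
  IntegrableOn.congr_fun ((integrableOn_Ioo_rpow_mul_sub_rpow hm one_half_pos hu0).const_mul _)
    (fun _ hx => (rpow_mul_rpow_neg_half_eq hu0 hu1 hx.2).symm) measurableSet_Ioo

theorem integral_Ioo_rpow_mul_rpow_neg_half {m u : ℝ} (hm : 0 < m) (hu0 : 0 < u) (hu1 : u < 1) :
    ∫ x in Ioo 0 u, x ^ (m - 1) * (u * (1 - u) * (u - x)) ^ (-(1:ℝ) / 2)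
      = beta m (1 / 2) * (u ^ (m - 1) * (1 - u) ^ (-(1:ℝ) / 2)) := by
  rw [setIntegral_congr_fun measurableSet_Ioo fun _ hx => rpow_mul_rpow_neg_half_eq hu0 hu1 hx.2,
    integral_const_mul, integral_Ioo_rpow_mul_sub_rpow hm one_half_pos hu0,
    Real.mul_rpow hu0.le (by linarith)]
  have hpow : u ^ (-(1:ℝ) / 2) * u ^ (m + 1 / 2 - 1) = u ^ (m - 1) := by
    rw [← Real.rpow_add hu0]; ring_nf
  linear_combination beta m (1 / 2) * (1 - u) ^ (-(1:ℝ) / 2) * hpow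

theorem integral_Ioo_rpow_mul_one_sub_rpow_neg_half {m : ℝ} (hm : 0 < m) :
    ∫ u in Ioo 0 1, u ^ (m - 1) * (1 - u) ^ (-(1:ℝ) / 2) = beta m (1 / 2) := by
  rw [show -(1:ℝ) / 2 = 1 / 2 - 1 by norm_num]
  simpa using integral_Ioo_rpow_mul_sub_rpow hm one_half_pos one_pos

theorem integrableOn_Ioo_rpow_mul_one_sub_rpow_neg_half {m : ℝ} (hm : 0 < m) :
    IntegrableOn (fun u : ℝ => u ^ (m - 1) * (1 - u) ^ (-(1:ℝ) / 2)) (Ioo 0 1) := by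
  rw [show -(1:ℝ) / 2 = 1 / 2 - 1 by norm_num]
  simpa using integrableOn_Ioo_rpow_mul_sub_rpow hm one_half_pos one_pos

/-- For every real `m > 0`, `∫₀¹ K(1−x) x^{m−1} dx = π Γ(m)² / (2 Γ(m+1/2)²)`. -/
theorem ellipticK_moment (m : ℝ) (hm : 0 < m) :
    ∫ x in (0:ℝ)..1, ellipticK (1 - x) * x ^ (m - 1) =
      π * Real.Gamma m ^ 2 / (2 * Real.Gamma (m + 1 / 2) ^ 2) := by
  set k : ℝ → ℝ → ℝ := fun x u => x ^ (m - 1) * (u * (1 - u) * (u - x)) ^ (-(1:ℝ) / 2)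
  have hk_inner : ∀ u ∈ Ioo (0:ℝ) 1,
      ∫ x in Ioo 0 u, k x u = beta m (1 / 2) * (u ^ (m - 1) * (1 - u) ^ (-(1:ℝ) / 2)) :=
    fun u hu => integral_Ioo_rpow_mul_rpow_neg_half hm hu.1 hu.2
  have hswap := integral_Ioo_integral_Ioo_swap_of_nonneg (f := k) (by fun_prop)
    (fun x u hx hxu hu => by
      have := mul_nonneg (mul_nonneg (hx.trans hxu).le (sub_nonneg.2 hu.le)) (sub_nonneg.2 hxu.le)
      positivity)
    (fun u hu => integrableOn_Ioo_rpow_mul_rpow_neg_half hm hu.1 hu.2)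
    (IntegrableOn.congr_fun ((integrableOn_Ioo_rpow_mul_one_sub_rpow_neg_half hm).const_mul _)
      (fun u hu => (hk_inner u hu).symm) measurableSet_Ioo)
  calc ∫ x in (0:ℝ)..1, ellipticK (1 - x) * x ^ (m - 1)
      = ∫ x in Ioo 0 1, (1 / 2) * ∫ u in Ioo x 1, k x u := by
        rw [intervalIntegral.integral_of_le zero_le_one, integral_Ioc_eq_integral_Ioo]
        refine setIntegral_congr_fun measurableSet_Ioo fun x hx => ?_
        rw [ellipticK_one_sub_eq_integral hx.1 hx.2, integral_const_mul]
        ring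
    _ = (1 / 2) * beta m (1 / 2) ^ 2 := by
        rw [integral_const_mul, hswap, setIntegral_congr_fun measurableSet_Ioo hk_inner,
          integral_const_mul, integral_Ioo_rpow_mul_one_sub_rpow_neg_half hm, sq]
    _ = π * Real.Gamma m ^ 2 / (2 * Real.Gamma (m + 1 / 2) ^ 2) := by
        rw [beta, Real.Gamma_one_half_eq, div_pow, mul_pow, Real.sq_sqrt Real.pi_pos.le]
        ring
end

section
/- For every real m > 0, ∫₀¹ x^{m−1} arccos(x) dx = √π · Γ((m+1)/2) / (m² Γ(m/2)). -/
/-!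
Integrating by parts against `d(x^m / m)` turns the arccos moment into
`(1/m) ∫₀¹ x^m / √(1 - x²) dx`; the substitution `u = x²` makes the latter half the Beta integral
`B((m+1)/2, 1/2) = Γ((m+1)/2) √π / Γ(m/2 + 1)`, and `Γ(m/2 + 1) = (m/2) Γ(m/2)`.
-/

open scoped Real
open MeasureTheory intervalIntegral Set

lemma integral_rpow_mul_one_sub_rpow {u v : ℝ} (hu : 0 < u) (hv : 0 < v) :
    ∫ x in (0:ℝ)..1, x ^ (u - 1) * (1 - x) ^ (v - 1) =
      Real.Gamma u * Real.Gamma v / Real.Gamma (u + v) := by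
  have hbeta := Complex.betaIntegral_eq_Gamma_mul_div u v (by simpa) (by simpa)
  rw [← Complex.ofReal_add, Complex.Gamma_ofReal, Complex.Gamma_ofReal, Complex.Gamma_ofReal,
    Complex.betaIntegral] at hbeta
  refine Complex.ofReal_injective ?_
  rw [Complex.ofReal_div, Complex.ofReal_mul, ← hbeta, ← intervalIntegral.integral_ofReal]
  refine integral_congr fun x hx => ?_
  rw [uIcc_of_le zero_le_one] at hx
  push_cast
  rw [Complex.ofReal_cpow hx.1, Complex.ofReal_cpow (sub_nonneg.2 hx.2)]
  push_cast
  ring_nf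

lemma integral_rpow_div_sqrt_one_sub_sq {m : ℝ} (hm : -1 < m) :
    ∫ x in (0:ℝ)..1, x ^ m / √(1 - x ^ 2) =
      √π * Real.Gamma ((m + 1) / 2) / (2 * Real.Gamma (m / 2 + 1)) := by
  set g : ℝ → ℝ := fun u => u ^ ((m + 1) / 2 - 1) * (1 - u) ^ ((1:ℝ) / 2 - 1) / 2
  have hsubst : ∫ x in (0:ℝ)..1, (g ∘ fun x => x ^ 2) x * (2 * x) = ∫ u in (0:ℝ)..1, g u := by
    simpa using integral_comp_mul_deriv_of_deriv_nonneg (a := 0) (b := 1) (g := g)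
      (continuous_pow 2).continuousOn (fun x _ => by simpa using hasDerivAt_pow 2 x)
      (fun x hx => by simp only [min_eq_left zero_le_one] at hx; linarith [hx.1])
  have hintegrand : ∀ x ∈ Ioc (0:ℝ) 1,
      x ^ m / √(1 - x ^ 2) = (g ∘ fun x => x ^ 2) x * (2 * x) := by
    rintro x ⟨hx0, hx1⟩
    have hsq : (x ^ 2) ^ ((m + 1) / 2 - 1) = x ^ m / x := by
      rw [← Real.rpow_natCast, ← Real.rpow_mul hx0.le, ← Real.rpow_sub_one hx0.ne']
      norm_num
      ring_nf
    have hsqrt : (1 - x ^ 2) ^ ((1:ℝ) / 2 - 1) = (√(1 - x ^ 2))⁻¹ := by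
      rw [Real.sqrt_eq_rpow, ← Real.rpow_neg (by nlinarith)]
      norm_num
    simp only [g, Function.comp_apply, hsq, hsqrt]
    field_simp
  rw [integral_congr_ae (ae_of_all _ fun x hx =>
      hintegrand x (by rwa [uIoc_of_le zero_le_one] at hx)), hsubst, intervalIntegral.integral_div,
    integral_rpow_mul_one_sub_rpow (by linarith) (by norm_num),
    show (m + 1) / 2 + 1 / 2 = m / 2 + 1 by ring, Real.Gamma_one_half_eq]
  ring

lemma integral_rpow_sub_one_mul_arccos {m : ℝ} (hm : 0 < m) :
    ∫ x in (0:ℝ)..1, x ^ (m - 1) * Real.arccos x =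
      (∫ x in (0:ℝ)..1, x ^ m / √(1 - x ^ 2)) / m := by
  have hu : ∀ x ∈ Ioo (0:ℝ) 1, HasDerivAt (fun x => x ^ m / m) (x ^ (m - 1)) x := fun x hx => by
    simpa [mul_div_assoc, mul_div_cancel_left₀ _ hm.ne'] using
      (Real.hasDerivAt_rpow_const (p := m) (Or.inl hx.1.ne')).div_const m
  have hv : ∀ x ∈ Ioo (0:ℝ) 1, HasDerivAt Real.arccos (-(√(1 - x ^ 2))⁻¹) x := fun x hx => by
    simpa using Real.hasDerivAt_arccos (by linarith [hx.1]) hx.2.ne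
  have hv' : IntervalIntegrable (fun x => (√(1 - x ^ 2))⁻¹) volume 0 1 := by
    simpa [Real.sqrt_inv] using
      Polynomial.Chebyshev.intervalIntegrable_sqrt_one_sub_sq_inv.mono_set <| by
        rw [uIcc_of_le zero_le_one, uIcc_of_le (by norm_num)]
        exact Icc_subset_Icc (by norm_num) le_rfl
  have hparts := integral_mul_deriv_eq_deriv_mul_of_hasDerivAt
    (v' := fun x => -(√(1 - x ^ 2))⁻¹)
    ((Real.continuous_rpow_const hm.le).div_const m).continuousOn
    Real.continuous_arccos.continuousOn (by simpa using hu) (by simpa using hv)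
    (intervalIntegrable_rpow' (by linarith)) hv'.neg
  rw [Real.arccos_one, Real.zero_rpow hm.ne', mul_zero, zero_div, zero_mul, sub_zero, zero_sub]
    at hparts
  calc ∫ x in (0:ℝ)..1, x ^ (m - 1) * Real.arccos x
      = -∫ x in (0:ℝ)..1, x ^ m / m * -(√(1 - x ^ 2))⁻¹ := by rw [hparts, neg_neg]
    _ = (∫ x in (0:ℝ)..1, x ^ m / √(1 - x ^ 2)) / m := by
      rw [← intervalIntegral.integral_neg, ← intervalIntegral.integral_div]
      congr with x
      ring

/-- For every real `m > 0`, `∫₀¹ x^{m−1} arccos(x) dx = √π Γ((m+1)/2) / (m² Γ(m/2))`. -/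
theorem arccos_moment (m : ℝ) (hm : 0 < m) :
    ∫ x in (0:ℝ)..1, x ^ (m - 1) * Real.arccos x =
      Real.sqrt π * Real.Gamma ((m + 1) / 2) / (m ^ 2 * Real.Gamma (m / 2)) := by
  have hGamma : Real.Gamma (m / 2) ≠ 0 := (Real.Gamma_pos_of_pos (by positivity)).ne'
  rw [integral_rpow_sub_one_mul_arccos hm, integral_rpow_div_sqrt_one_sub_sq (by linarith),
    Real.Gamma_add_one (by positivity)]
  field_simp
end

section
/- For every real x with 0 < |x| ≤ 1, the following two identities hold: Σ_{n=1}^∞ (2n choose n) x^{2n} / (4ⁿ · 2n) = log(2/(1 + √(1−x²))), and Σ_{n=1}^∞ (2n choose n) x^{2n} / (4ⁿ (2n+1)) = arcsin(x)/x − 1. -/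
/-!
Put `c n = (2n choose n) / 4ⁿ`. These are the coefficients of the binomial series
`(1 - t)^(-1/2) = ∑ c n tⁿ`, so `∑ c n x^(2n) = 1 / √(1 - x²)` for `|x| < 1`. Integrating termwise
from `0`, `arcsin` is the antiderivative of `∑ c n x^(2n)` and `log (2 / (1 + √(1 - x²)))` that of
`∑ c (n+1) x^(2n+1) = (1 / √(1 - x²) - 1) / x`, which gives both series on `(-1, 1)`. Since
`c n ≤ 1 / √(n+1)`, both series converge uniformly on `[-1, 1]`, so the identities extend to the
endpoints by continuity.
-/

open Real Set Filter Topology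

noncomputable def scaledCentralBinom (n : ℕ) : ℝ := Nat.centralBinom n / 4 ^ n

namespace scaledCentralBinom

lemma pos (n : ℕ) : 0 < scaledCentralBinom n := by
  unfold scaledCentralBinom
  have := n.centralBinom_pos
  positivity

lemma succ (n : ℕ) :
    scaledCentralBinom (n + 1) = (2 * n + 1) / (2 * n + 2) * scaledCentralBinom n := by
  have h : ((n : ℝ) + 1) * Nat.centralBinom (n + 1) = 2 * (2 * n + 1) * Nat.centralBinom n := by
    exact_mod_cast Nat.succ_mul_centralBinom_succ n
  unfold scaledCentralBinom
  rw [pow_succ]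
  field_simp
  linear_combination 2 * h

lemma ascPochhammer_eval_half (n : ℕ) :
    (ascPochhammer ℝ n).eval (1 / 2) = n.factorial * scaledCentralBinom n := by
  induction n with
  | zero => simp [scaledCentralBinom]
  | succ n ih =>
    rw [ascPochhammer_succ_eval, ih, succ, Nat.factorial_succ]
    push_cast
    field_simp
    ring

lemma multichoose_half (n : ℕ) : Ring.multichoose (1 / 2 : ℝ) n = scaledCentralBinom n := by
  have h := Ring.factorial_nsmul_multichoose_eq_ascPochhammer (1 / 2 : ℝ) n
  rw [Polynomial.ascPochhammer_smeval_eq_eval, ascPochhammer_eval_half, nsmul_eq_mul] at h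
  exact mul_left_cancel₀ (by positivity) h

lemma sq_mul_succ_le_one (n : ℕ) : scaledCentralBinom n ^ 2 * (n + 1) ≤ 1 := by
  induction n with
  | zero => simp [scaledCentralBinom]
  | succ n ih =>
    have hn : (0 : ℝ) ≤ n := n.cast_nonneg
    have key : ((2 * n + 1) / (2 * n + 2) : ℝ) ^ 2 * (n + 2) ≤ n + 1 := by
      rw [div_pow, div_mul_eq_mul_div, div_le_iff₀ (by positivity)]
      nlinarith
    calc scaledCentralBinom (n + 1) ^ 2 * ((n + 1 : ℕ) + 1)
        = scaledCentralBinom n ^ 2 * (((2 * n + 1) / (2 * n + 2) : ℝ) ^ 2 * (n + 2)) := by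
          rw [succ]; push_cast; ring
      _ ≤ scaledCentralBinom n ^ 2 * (n + 1) := by gcongr
      _ ≤ 1 := ih

lemma le_one (n : ℕ) : scaledCentralBinom n ≤ 1 := by
  have h := sq_mul_succ_le_one n
  have : (0 : ℝ) ≤ n := n.cast_nonneg
  nlinarith [pos n]

lemma div_succ_le (n : ℕ) :
    scaledCentralBinom n / (n + 1) ≤ (((n + 1 : ℕ) : ℝ) ^ (3 / 2 : ℝ))⁻¹ := by
  have hsqrt : scaledCentralBinom n * √(n + 1) ≤ 1 := by
    rw [← Real.sqrt_sq (pos n).le, ← Real.sqrt_mul (sq_nonneg _)]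
    exact Real.sqrt_le_one.mpr (sq_mul_succ_le_one n)
  have e : ((n + 1 : ℕ) : ℝ) ^ (3 / 2 : ℝ) = (n + 1) * √(n + 1) := by
    rw [show (3 / 2 : ℝ) = 1 + 1 / 2 by norm_num, Real.rpow_add (by positivity),
      Real.rpow_one, Real.sqrt_eq_rpow]
    push_cast; rfl
  rw [e, mul_inv, div_eq_mul_inv, mul_comm]
  gcongr
  rwa [← one_div, le_div_iff₀ (by positivity)]

lemma summable_div_succ : Summable fun n => scaledCentralBinom n / (n + 1) :=
  Summable.of_nonneg_of_le (fun n => (div_pos (pos n) (by positivity)).le) div_succ_le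
    ((summable_nat_add_iff 1).mpr (Real.summable_nat_rpow_inv.mpr (by norm_num)))

lemma abs_le_one (n : ℕ) : |scaledCentralBinom n| ≤ 1 := by
  rw [abs_of_pos (pos n)]
  exact le_one n

lemma summable_abs_div {k : ℕ} {e : ℕ → ℕ} (he : ∀ n, n + k ≤ e n) :
    Summable fun n => |scaledCentralBinom (n + k)| / (e n + 1) := by
  refine Summable.of_nonneg_of_le (fun n => by positivity) (fun n => ?_)
    ((summable_nat_add_iff k).mpr summable_div_succ)
  rw [abs_of_pos (pos _)]
  have := (pos (n + k)).le
  gcongr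
  exact_mod_cast he n

end scaledCentralBinom

theorem hasSum_scaledCentralBinom_mul_pow {t : ℝ} (ht : |t| < 1) :
    HasSum (fun n => scaledCentralBinom n * t ^ n) (1 / √(1 - t)) := by
  have h := (one_div_one_sub_rpow_hasFPowerSeriesOnBall_zero (1 / 2)).hasSum (y := t)
    (by simpa [edist_zero_right, enorm_eq_nnnorm, ← NNReal.coe_lt_one] using ht)
  rw [zero_add, ← Real.sqrt_eq_rpow] at h
  refine (funext fun n => ?_ : (fun n => scaledCentralBinom n * t ^ n) = _) ▸ h
  rw [FormalMultilinearSeries.ofScalars_apply_eq, smul_eq_mul, ← Ring.multichoose_eq,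
    scaledCentralBinom.multichoose_half, mul_comm]

section AntiderivSeries

variable (a : ℕ → ℝ) (e : ℕ → ℕ)

/-- The exponents `e` let one set of lemmas serve both the even and the odd power series. -/
noncomputable def antiderivSeries (y : ℝ) : ℝ := ∑' n, a n * y ^ (e n + 1) / (e n + 1)

variable {a e}

lemma antiderivSeries_zero : antiderivSeries a e 0 = 0 := by
  simp [antiderivSeries]

lemma hasDerivAt_antiderivSeries (ha : ∀ n, |a n| ≤ 1) (he : e.Injective) {x : ℝ}
    (hx : |x| < 1) : HasDerivAt (antiderivSeries a e) (∑' n, a n * x ^ e n) x := by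
  obtain ⟨r, hxr, hr⟩ := exists_between hx
  have hr₀ : 0 < r := (abs_nonneg x).trans_lt hxr
  have hterm (n : ℕ) (y : ℝ) :
      HasDerivAt (fun z => a n * z ^ (e n + 1) / (e n + 1)) (a n * y ^ e n) y := by
    refine (((hasDerivAt_pow (e n + 1) y).const_mul (a n)).div_const _).congr_deriv ?_
    rw [Nat.add_sub_cancel]
    push_cast
    field_simp
  have hbound (n : ℕ) (y : ℝ) (hy : y ∈ Ioo (-r) r) : ‖a n * y ^ e n‖ ≤ r ^ e n := by
    rw [norm_mul, norm_pow, Real.norm_eq_abs, Real.norm_eq_abs, ← one_mul (r ^ e n)]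
    exact mul_le_mul (ha n) (pow_le_pow_left₀ (abs_nonneg y) (abs_le.mpr ⟨hy.1.le, hy.2.le⟩) _)
      (by positivity) zero_le_one
  exact hasDerivAt_tsum_of_isPreconnected
    ((summable_geometric_of_lt_one hr₀.le hr).comp_injective he) isOpen_Ioo
    isPreconnected_Ioo (fun n y _ => hterm n y) hbound (y₀ := 0) ⟨neg_lt_zero.mpr hr₀, hr₀⟩
    (by simp) (abs_lt.mp hxr)

lemma norm_antiderivSeries_term_le {y : ℝ} (hy : y ∈ Icc (-1) 1) (n : ℕ) :
    ‖a n * y ^ (e n + 1) / (e n + 1)‖ ≤ |a n| / (e n + 1) := by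
  rw [norm_div, norm_mul, norm_pow, Real.norm_eq_abs, Real.norm_eq_abs, Real.norm_eq_abs,
    abs_of_pos (by positivity : (0 : ℝ) < e n + 1)]
  gcongr
  exact mul_le_of_le_one_right (abs_nonneg _) (pow_le_one₀ (abs_nonneg y) (abs_le.mpr hy))

lemma summable_antiderivSeries (hs : Summable fun n => |a n| / (e n + 1)) {y : ℝ}
    (hy : y ∈ Icc (-1) 1) : Summable fun n => a n * y ^ (e n + 1) / (e n + 1) :=
  hs.of_norm_bounded (norm_antiderivSeries_term_le hy)

lemma continuousOn_antiderivSeries (hs : Summable fun n => |a n| / (e n + 1)) :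
    ContinuousOn (antiderivSeries a e) (Icc (-1) 1) :=
  continuousOn_tsum (fun n => by fun_prop) hs fun n _ hy => norm_antiderivSeries_term_le hy n

end AntiderivSeries

lemma eqOn_Icc_of_hasDerivAt {f g f' : ℝ → ℝ} {a b x₀ : ℝ} (hx₀ : x₀ ∈ Ioo a b)
    (hf : ContinuousOn f (Icc a b)) (hg : ContinuousOn g (Icc a b))
    (hf' : ∀ x ∈ Ioo a b, HasDerivAt f (f' x) x) (hg' : ∀ x ∈ Ioo a b, HasDerivAt g (f' x) x)
    (h₀ : f x₀ = g x₀) : EqOn f g (Icc a b) := by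
  have hIoo : EqOn f g (Ioo a b) :=
    isOpen_Ioo.eqOn_of_deriv_eq isPreconnected_Ioo
      (fun x hx => (hf' x hx).differentiableAt.differentiableWithinAt)
      (fun x hx => (hg' x hx).differentiableAt.differentiableWithinAt)
      (fun x hx => (hf' x hx).deriv.trans (hg' x hx).deriv.symm) hx₀ h₀
  exact hIoo.of_subset_closure hf hg Ioo_subset_Icc_self
    (closure_Ioo (hx₀.1.trans hx₀.2).ne).superset

theorem hasSum_antiderivSeries_of_hasDerivAt {a : ℕ → ℝ} {e : ℕ → ℕ} (ha : ∀ n, |a n| ≤ 1)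
    (he : e.Injective) (hs : Summable fun n => |a n| / (e n + 1)) {G : ℝ → ℝ}
    (hG : ContinuousOn G (Icc (-1) 1))
    (hG' : ∀ y ∈ Ioo (-1) 1, HasDerivAt G (∑' n, a n * y ^ e n) y) (hG₀ : G 0 = 0)
    {x : ℝ} (hx : x ∈ Icc (-1) 1) : HasSum (fun n => a n * x ^ (e n + 1) / (e n + 1)) (G x) := by
  have h := eqOn_Icc_of_hasDerivAt (by norm_num) (continuousOn_antiderivSeries hs) hG
    (fun y hy => hasDerivAt_antiderivSeries ha he (abs_lt.mpr hy)) hG'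
    (antiderivSeries_zero.trans hG₀.symm) hx
  exact h ▸ (summable_antiderivSeries hs hx).hasSum

theorem hasSum_scaledCentralBinom_mul_pow_two_mul {x : ℝ} (hx : |x| < 1) :
    HasSum (fun n => scaledCentralBinom n * x ^ (2 * n)) (1 / √(1 - x ^ 2)) := by
  simpa only [pow_mul] using hasSum_scaledCentralBinom_mul_pow (t := x ^ 2)
    (by rw [abs_pow, sq_lt_one_iff₀ (abs_nonneg x)]; exact hx)

lemma hasDerivAt_log_two_div_one_add_sqrt {x : ℝ} (hx : |x| < 1) :
    HasDerivAt (fun y => log (2 / (1 + √(1 - y ^ 2))))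
      (x / (√(1 - x ^ 2) * (1 + √(1 - x ^ 2)))) x := by
  have hx2 : 0 < 1 - x ^ 2 := by nlinarith [sq_abs x, abs_nonneg x]
  have hsqrt : HasDerivAt (fun y => √(1 - y ^ 2)) (-(2 * x) / (2 * √(1 - x ^ 2))) x := by
    refine HasDerivAt.sqrt ?_ hx2.ne'
    simpa using (hasDerivAt_pow 2 x).const_sub 1
  have hlog := ((hsqrt.const_add 1).log (by positivity)).const_sub (log 2)
  refine (hlog.congr_of_eventuallyEq (Eventually.of_forall fun y => ?_)).congr_deriv ?_
  · rw [log_div two_ne_zero (by positivity)]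
  · field_simp

lemma tsum_scaledCentralBinom_succ_mul_pow {x : ℝ} (hx : |x| < 1) :
    ∑' n, scaledCentralBinom (n + 1) * x ^ (2 * n + 1) =
      x / (√(1 - x ^ 2) * (1 + √(1 - x ^ 2))) := by
  rcases eq_or_ne x 0 with rfl | hx0
  · simp
  have hx2 : 0 < 1 - x ^ 2 := by nlinarith [sq_abs x, abs_nonneg x]
  have hsq := Real.sq_sqrt hx2.le
  have htail : HasSum (fun n => scaledCentralBinom (n + 1) * x ^ (2 * (n + 1)))
      (1 / √(1 - x ^ 2) - 1) := by
    simpa [scaledCentralBinom] using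
      (hasSum_nat_add_iff' 1).mpr (hasSum_scaledCentralBinom_mul_pow_two_mul hx)
  have h := (htail.div_const x).tsum_eq
  rw [show (fun n => scaledCentralBinom (n + 1) * x ^ (2 * (n + 1)) / x) =
      fun n => scaledCentralBinom (n + 1) * x ^ (2 * n + 1) by
    ext n; rw [mul_add, mul_one, pow_succ, ← mul_assoc, mul_div_cancel_right₀ _ hx0]] at h
  rw [h]
  field_simp
  linear_combination -hsq

theorem hasSum_arcsin {x : ℝ} (hx : x ∈ Icc (-1) 1) :
    HasSum (fun n => scaledCentralBinom n * x ^ (2 * n + 1) / (2 * n + 1)) (arcsin x) := by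
  have hderiv (y : ℝ) (hy : y ∈ Ioo (-1) 1) :
      HasDerivAt arcsin (∑' n, scaledCentralBinom n * y ^ (2 * n)) y := by
    rw [(hasSum_scaledCentralBinom_mul_pow_two_mul (abs_lt.mpr hy)).tsum_eq]
    exact hasDerivAt_arcsin hy.1.ne' hy.2.ne
  simpa using hasSum_antiderivSeries_of_hasDerivAt (e := (2 * ·)) scaledCentralBinom.abs_le_one
    (mul_right_injective₀ two_ne_zero) (scaledCentralBinom.summable_abs_div (k := 0) (by omega))
    continuous_arcsin.continuousOn hderiv arcsin_zero hx

theorem hasSum_log_two_div_one_add_sqrt {x : ℝ} (hx : x ∈ Icc (-1) 1) :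
    HasSum (fun n => scaledCentralBinom (n + 1) * x ^ (2 * n + 2) / (2 * n + 2))
      (log (2 / (1 + √(1 - x ^ 2)))) := by
  have hpos (y : ℝ) : 0 < 2 / (1 + √(1 - y ^ 2)) := by positivity
  have hcont : ContinuousOn (fun y => log (2 / (1 + √(1 - y ^ 2)))) (Icc (-1) 1) :=
    (Continuous.log (continuous_const.div (by fun_prop) fun y => by positivity)
      fun y => (hpos y).ne').continuousOn
  have hderiv (y : ℝ) (hy : y ∈ Ioo (-1) 1) :
      HasDerivAt (fun y => log (2 / (1 + √(1 - y ^ 2))))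
        (∑' n, scaledCentralBinom (n + 1) * y ^ (2 * n + 1)) y := by
    rw [tsum_scaledCentralBinom_succ_mul_pow (abs_lt.mpr hy)]
    exact hasDerivAt_log_two_div_one_add_sqrt (abs_lt.mpr hy)
  simpa [add_assoc, one_add_one_eq_two] using hasSum_antiderivSeries_of_hasDerivAt
    (e := (2 * · + 1)) (fun n => scaledCentralBinom.abs_le_one _)
    ((add_left_injective 1).comp (mul_right_injective₀ two_ne_zero))
    (scaledCentralBinom.summable_abs_div (k := 1) (by omega)) hcont hderiv
    (by norm_num) hx

/-- For `0 < |x| ≤ 1`: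
`Σ_{n≥1} (2n choose n) x^{2n}/(4ⁿ·2n) = log(2/(1+√(1−x²)))` and
`Σ_{n≥1} (2n choose n) x^{2n}/(4ⁿ(2n+1)) = arcsin(x)/x − 1`. -/
theorem centralBinom_gf (x : ℝ) (hx : 0 < |x|) (hx1 : |x| ≤ 1) :
    (∑' n : ℕ, (Nat.centralBinom (n + 1) : ℝ) * x ^ (2 * (n + 1))
        / (4 ^ (n + 1) * (2 * (n + 1) : ℝ)) =
      Real.log (2 / (1 + Real.sqrt (1 - x ^ 2)))) ∧
    (∑' n : ℕ, (Nat.centralBinom (n + 1) : ℝ) * x ^ (2 * (n + 1))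
        / (4 ^ (n + 1) * (2 * (n + 1) + 1 : ℝ)) =
      Real.arcsin x / x - 1) := by
  have hx0 : x ≠ 0 := abs_pos.mp hx
  have hxI : x ∈ Icc (-1) 1 := abs_le.mp hx1
  constructor
  · rw [← (hasSum_log_two_div_one_add_sqrt hxI).tsum_eq]
    refine tsum_congr fun n => ?_
    simp only [scaledCentralBinom]
    field_simp
    ring
  · have htail := ((hasSum_nat_add_iff' 1).mpr (hasSum_arcsin hxI)).div_const x
    refine (tsum_congr fun n => ?_).trans (htail.tsum_eq.trans ?_)
    · simp only [scaledCentralBinom]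
      push_cast
      field_simp
      ring
    · simp [scaledCentralBinom, sub_div, hx0]
end
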